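/- arXiv:0810.0345 — 4 statements merged into one kernel-verified Lean document; each statement's English description precedes it below -/
import Mathlib

section
/- Let G be a finite non-cyclic group of prime power order p^n. Then G has more than one subgroup of order p, unless some non-trivial element lies in Cyc(G). More precisely, if Cyc(G) = 1 and G is a non-cyclic p-group, then G has at least two distinct subgroups of order p. -/
/-- The cyclicizer of a group: elements generating a cyclic subgroup with every element. -/
def cyclicizer (G : Type*) [Group G] : Set G :=
  {x | ∀ y : G, IsCyclic (Subgroup.closure {x, y} : Subgroup G)}

/-- The relative cyclicizer of an element. -/
def relCyclicizer {G : Type*} [Group G] (x : G) : Set G :=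
  {g | IsCyclic (Subgroup.closure {g, x} : Subgroup G)}

/-- A group is locally cyclic if every finitely generated subgroup is cyclic. -/
def IsLocallyCyclic (G : Type*) [Group G] : Prop :=
  ∀ H : Subgroup G, H.FG → IsCyclic H

/-- The non-cyclic graph of a group. -/
def noncyclicGraph (G : Type*) [Group G] :
    SimpleGraph {g : G // g ∉ cyclicizer G} where
  Adj x y := x ≠ y ∧ ¬ IsCyclic (Subgroup.closure {(x : G), (y : G)} : Subgroup G)
  symm := ⟨fun x y h => ⟨h.1.symm, by rw [Set.pair_comm]; exact h.2⟩⟩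
  loopless := ⟨fun x h => h.1 rfl⟩

/-- The cyclic graph of a group (complement of the non-cyclic graph). -/
def cyclicGraph (G : Type*) [Group G] :
    SimpleGraph {g : G // g ∉ cyclicizer G} where
  Adj x y := x ≠ y ∧ IsCyclic (Subgroup.closure {(x : G), (y : G)} : Subgroup G)
  symm := ⟨fun x y h => ⟨h.1.symm, by rw [Set.pair_comm]; exact h.2⟩⟩
  loopless := ⟨fun x h => h.1 rfl⟩

/-- A graph has clique number `n` if it has a clique of size `n` and no larger clique. -/
def hasCliqueNum {V : Type*} (Γ : SimpleGraph V) (n : ℕ) : Prop :=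
  (∃ s : Finset V, Γ.IsNClique n s) ∧ ∀ s : Finset V, Γ.IsClique (s : Set V) → s.card ≤ n

/-! If `⟨g⟩` were the only subgroup of order `p`, then every nontrivial cyclic subgroup `⟨y⟩`,
having a subgroup of order `p`, would contain `g`; hence `⟨g, y⟩ = ⟨y⟩` is cyclic for every `y`,
so `g ∈ Cyc(G) = 1`, which is absurd. -/

open Subgroup

theorem isCyclic_closure_pair_of_mem_zpowers {G : Type*} [Group G] {a b : G}
    (h : a ∈ zpowers b) : IsCyclic (closure {a, b} : Subgroup G) := by
  have hclosure : closure {a, b} = zpowers b := by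
    rw [Set.insert_eq, Subgroup.closure_union, ← zpowers_eq_closure, ← zpowers_eq_closure,
      sup_eq_right.mpr (zpowers_le.mpr h)]
  rw [hclosure]
  infer_instance

theorem mem_cyclicizer_of_forall_ne_one {G : Type*} [Group G] {g : G}
    (h : ∀ y : G, y ≠ 1 → g ∈ zpowers y) : g ∈ cyclicizer G := by
  intro y
  rcases eq_or_ne y 1 with rfl | hy
  · rw [Set.pair_comm]
    exact isCyclic_closure_pair_of_mem_zpowers (one_mem _)
  · exact isCyclic_closure_pair_of_mem_zpowers (h y hy)

theorem IsPGroup.exists_mem_zpowers_orderOf_eq_prime {G : Type*} [Group G] {p : ℕ}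
    [Fact p.Prime] (hpg : IsPGroup p G) {y : G} (hy : y ≠ 1) :
    ∃ z ∈ zpowers y, orderOf z = p :=
  ⟨y ^ (orderOf y / p), pow_mem (mem_zpowers y) _,
    orderOf_pow_orderOf_div ((hpg.isOfFinOrder (Fact.out : p.Prime).ne_zero y).orderOf_pos.ne')
      (hpg.dvd_orderOf hy)⟩

theorem IsPGroup.mem_cyclicizer_of_unique {G : Type*} [Group G] {p : ℕ} [Fact p.Prime]
    (hpg : IsPGroup p G) {g : G}
    (huniq : ∀ K : Subgroup G, Nat.card K = p → K = zpowers g) : g ∈ cyclicizer G := by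
  refine mem_cyclicizer_of_forall_ne_one fun y hy => ?_
  obtain ⟨z, hzy, hz⟩ := hpg.exists_mem_zpowers_orderOf_eq_prime hy
  have hzg : zpowers z = zpowers g := huniq _ (by rw [Nat.card_zpowers, hz])
  exact zpowers_le.mpr hzy (hzg ▸ mem_zpowers g)

theorem two_subgroups_of_order_p_of_trivial_cyclicizer_general
    {G : Type*} [Group G] (p : ℕ) (hp : p.Prime)
    (hpg : IsPGroup p G) (hG : ¬ IsCyclic G)
    (hcyc : cyclicizer G = {1}) :
    ∃ H K : Subgroup G, H ≠ K ∧ Nat.card H = p ∧ Nat.card K = p := by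
  have : Fact p.Prime := ⟨hp⟩
  have : Nontrivial G := by
    contrapose! hG
    infer_instance
  obtain ⟨y, hy⟩ := exists_ne (1 : G)
  obtain ⟨g, -, hg⟩ := hpg.exists_mem_zpowers_orderOf_eq_prime hy
  by_contra! hcon
  have huniq : ∀ K : Subgroup G, Nat.card K = p → K = zpowers g := fun K hK =>
    by_contra fun hne => hcon K _ hne hK (by rw [Nat.card_zpowers, hg])
  have hg1 : g = 1 := by simpa [hcyc] using hpg.mem_cyclicizer_of_unique huniq
  exact hp.one_lt.ne' (by rw [← hg, hg1, orderOf_one])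

theorem two_subgroups_of_order_p_of_trivial_cyclicizer
    {G : Type*} [Group G] [Finite G] (p : ℕ) (hp : p.Prime)
    (hpg : IsPGroup p G) (hG : ¬ IsCyclic G)
    (hcyc : cyclicizer G = {1}) :
    ∃ H K : Subgroup G, H ≠ K ∧ Nat.card H = p ∧ Nat.card K = p :=
  two_subgroups_of_order_p_of_trivial_cyclicizer_general p hp hpg hG hcyc
end

section
/- Let G be a non-locally-cyclic group. Then the cyclic graph of G (vertices G \ Cyc(G), edges between distinct x, y with ⟨x,y⟩ cyclic) is never a complete graph: there exist two distinct vertices x, y ∈ G \ Cyc(G) with ⟨x,y⟩ not cyclic. -/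
-- `⟨insert a S⟩ = ⟨a, d⟩` once `⟨S⟩ = ⟨d⟩`, so induct on a finite generating set.
theorem isLocallyCyclic_of_forall_isCyclic_closure_pair {G : Type*} [Group G]
    (hpair : ∀ x y : G, IsCyclic (Subgroup.closure {x, y} : Subgroup G)) :
    IsLocallyCyclic G := by
  classical
  rintro H ⟨S, rfl⟩
  induction S using Finset.induction_on with
  | empty =>
    rw [Finset.coe_empty, Subgroup.closure_empty]
    infer_instance
  | insert a S _ ih =>
    obtain ⟨d, hd⟩ := (Subgroup.isCyclic_iff_exists_zpowers_eq_top _).mp ih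
    have hclosure : Subgroup.closure ↑(insert a S) = Subgroup.closure {a, d} := by
      rw [Finset.coe_insert, Set.insert_eq, Subgroup.closure_union, ← hd,
        Subgroup.zpowers_eq_closure, ← Subgroup.closure_union, ← Set.insert_eq]
    rw [hclosure]
    exact hpair a d

theorem isCyclic_closure_pair_self {G : Type*} [Group G] (x : G) :
    IsCyclic (Subgroup.closure {x, x} : Subgroup G) := by
  rw [Set.pair_eq_singleton, ← Subgroup.zpowers_eq_closure]
  infer_instance

theorem cyclicGraph_not_complete
    {G : Type*} [Group G] (h : ¬ IsLocallyCyclic G) :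
    ∃ x y : G, x ∉ cyclicizer G ∧ y ∉ cyclicizer G ∧ x ≠ y ∧
      ¬ IsCyclic (Subgroup.closure {x, y} : Subgroup G) := by
  by_contra! hcomplete
  refine h (isLocallyCyclic_of_forall_isCyclic_closure_pair fun x y => ?_)
  by_cases hx : x ∈ cyclicizer G
  · exact hx y
  by_cases hy : y ∈ cyclicizer G
  · rw [Set.pair_comm]
    exact hy x
  obtain rfl | hxy := eq_or_ne x y
  · exact isCyclic_closure_pair_self x
  · exact hcomplete x y hx hy hxy
end

section
/- Let G be a finite non-cyclic group such that |G| + |Cyc(G)| > 2|Cyc_G(x)| for every x ∈ Z(G) \ Cyc(G). Then every vertex x of the non-cyclic graph of G has degree greater than (|G| − |Cyc(G)|)/2, and hence (by Dirac's theorem) the non-cyclic graph is Hamiltonian. -/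
namespace SimpleGraph

variable {V : Type*} {G : SimpleGraph V}

namespace Walk

lemma IsCycle.isHamiltonianCycle_of_forall_mem_support [DecidableEq V] {v : V} {c : G.Walk v v}
    (hc : c.IsCycle) (hall : ∀ x, x ∈ c.support) : c.IsHamiltonianCycle := by
  refine ⟨hc, hc.isPath_tail.isHamiltonian_of_mem fun x => ?_⟩
  rw [support_tail_of_not_nil c hc.not_nil]
  rcases List.mem_cons.mp ((c.cons_tail_support).symm ▸ hall x) with rfl | hx
  · exact c.end_mem_tail_support hc.not_nil
  · exact hx

lemma IsCycle.exists_isPath_length_eq [DecidableEq V] {v y x : V} {c : G.Walk v v}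
    (hc : c.IsCycle) (hy : y ∈ c.support) (hx : x ∉ c.support) (hyx : G.Adj y x) :
    ∃ (a : V) (q : G.Walk a x), q.IsPath ∧ q.length = c.length := by
  set c' := c.rotate y hy
  have hc' : c'.IsCycle := hc.rotate hy
  have hxc' : x ∉ c'.tail.support := by
    rw [support_tail_of_not_nil c' hc'.not_nil]
    exact fun h => hx ((mem_support_rotate_iff c y hy).mp (List.mem_of_mem_tail h))
  refine ⟨_, c'.tail.concat hyx, hc'.isPath_tail.concat hxc' hyx, ?_⟩
  rw [length_concat, length_tail_add_one hc'.not_nil, length_rotate]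

lemma IsPath.exists_isCycle_of_adj_getVert {a b : V} {p : G.Walk a b} (hp : p.IsPath)
    (hlen : 2 ≤ p.length) {i : ℕ} (hi : i < p.length) (ha : G.Adj (p.getVert (i + 1)) a)
    (hb : G.Adj (p.getVert i) b) :
    ∃ (v : V) (c : G.Walk v v), c.IsCycle ∧ c.length = p.length + 1 ∧
      ∀ x, x ∈ c.support ↔ x ∈ p.support := by
  have htake : (p.take i).support = p.support.take (i + 1) := support_take p i
  have hdrop : (p.drop (i + 1)).support = p.support.drop (i + 1) := by
    rw [drop_support_eq_support_drop_min, min_eq_left (by omega)]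
  have hdisj : (p.take i).support.Disjoint (p.drop (i + 1)).support := by
    rw [htake, hdrop]
    exact List.disjoint_of_nodup_append ((List.take_append_drop _ _).symm ▸ hp.support_nodup)
  have hA : (cons ha (p.take i)).IsPath :=
    (cons_isPath_iff _ _).mpr ⟨hp.take i, fun h => hdisj h (p.drop (i + 1)).start_mem_support⟩
  have hB : (cons hb (p.drop (i + 1)).reverse).IsPath := by
    refine (cons_isPath_iff _ _).mpr ⟨(hp.drop _).reverse, fun h => ?_⟩
    exact hdisj (p.take i).end_mem_support (by simpa using h)
  refine ⟨_, _, hA.isCycle_append hB ?_ ?_, ?_, fun x => ?_⟩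
  · simpa using hdisj
  · simp only [length_cons, take_length, length_reverse, drop_length]
    omega
  · simp only [length_append, length_cons, take_length, length_reverse, drop_length]
    omega
  · have hu := (p.take i).end_mem_support
    have hw := (p.drop (i + 1)).start_mem_support
    rw [← List.take_append_drop (i + 1) p.support, ← htake, ← hdrop]
    simp only [support_append, support_cons, support_reverse, List.tail_cons, List.mem_cons,
      List.mem_append, List.mem_reverse]
    grind

lemma IsPath.mem_support_of_adj_start_of_forall_length_le {a b c : V} {p : G.Walk a b}
    (hp : p.IsPath) (hmax : ∀ (a' b' : V) (q : G.Walk a' b'), q.IsPath → q.length ≤ p.length)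
    (hac : G.Adj a c) : c ∈ p.support := by
  by_contra hc
  have := hmax _ _ _ ((cons_isPath_iff hac.symm p).mpr ⟨hp, hc⟩)
  simp at this

lemma exists_adj_getVert_of_length_lt_degree_add_degree [Fintype V] [DecidableEq V]
    [DecidableRel G.Adj] {a b : V} (p : G.Walk a b) (ha : ∀ c, G.Adj a c → c ∈ p.support)
    (hb : ∀ c, G.Adj b c → c ∈ p.support) (hlt : p.length < G.degree a + G.degree b) :
    ∃ i < p.length, G.Adj a (p.getVert (i + 1)) ∧ G.Adj b (p.getVert i) := by
  set S := (Finset.range p.length).filter fun i => G.Adj a (p.getVert (i + 1))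
  set T := (Finset.range p.length).filter fun i => G.Adj b (p.getVert i)
  have hS : G.degree a ≤ S.card := by
    rw [← card_neighborFinset_eq_degree]
    refine (Finset.card_le_card fun c hc => ?_).trans
      (Finset.card_image_le (f := fun i => p.getVert (i + 1)))
    rw [mem_neighborFinset] at hc
    obtain ⟨j, rfl, hj⟩ := mem_support_iff_exists_getVert.mp (ha c hc)
    obtain ⟨k, rfl⟩ : ∃ k, j = k + 1 :=
      Nat.exists_eq_add_one.mpr (Nat.pos_of_ne_zero fun h => by simp [h] at hc)
    exact Finset.mem_image.mpr ⟨k, by simp [S, hc]; omega, rfl⟩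
  have hT : G.degree b ≤ T.card := by
    rw [← card_neighborFinset_eq_degree]
    refine (Finset.card_le_card fun c hc => ?_).trans (Finset.card_image_le (f := p.getVert))
    rw [mem_neighborFinset] at hc
    obtain ⟨j, rfl, hj⟩ := mem_support_iff_exists_getVert.mp (hb c hc)
    have hjL : j ≠ p.length := fun h => by simp [h] at hc
    exact Finset.mem_image.mpr ⟨j, by simp [T, hc]; omega, rfl⟩
  obtain ⟨i, hi⟩ := Finset.inter_nonempty_of_card_lt_card_add_card (Finset.filter_subset _ _)
    (Finset.filter_subset _ _) (by rw [Finset.card_range]; omega :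
      (Finset.range p.length).card < S.card + T.card)
  simp only [Finset.mem_inter, Finset.mem_filter, Finset.mem_range] at hi
  exact ⟨i, hi.1.1, hi.1.2, hi.2.2⟩

lemma IsPath.degree_le_length_of_forall_adj_mem_support [Fintype V] [DecidableEq V]
    [DecidableRel G.Adj] {a b : V} {p : G.Walk a b} (hp : p.IsPath)
    (ha : ∀ c, G.Adj a c → c ∈ p.support) :
    G.degree a ≤ p.length := by
  have hsub : G.neighborFinset a ⊆ p.support.toFinset.erase a := fun c hc => by
    rw [mem_neighborFinset] at hc
    exact Finset.mem_erase.mpr ⟨hc.ne', List.mem_toFinset.mpr (ha c hc)⟩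
  have := Finset.card_le_card hsub
  rwa [Finset.card_erase_of_mem (by simp), List.toFinset_card_of_nodup hp.support_nodup,
    length_support, Nat.add_sub_cancel, card_neighborFinset_eq_degree] at this

lemma IsPath.degree_add_length_add_two_le_card [Fintype V] [DecidableEq V] [DecidableRel G.Adj]
    {a b x : V} {p : G.Walk a b} (hp : p.IsPath) (hx : x ∉ p.support)
    (hxp : ∀ y ∈ p.support, ¬ G.Adj x y) : G.degree x + p.length + 2 ≤ Fintype.card V := by
  have hdisj : Disjoint (insert x p.support.toFinset) (G.neighborFinset x) := by
    refine Finset.disjoint_left.mpr fun y hy hxy => ?_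
    rw [mem_neighborFinset] at hxy
    rcases Finset.mem_insert.mp hy with rfl | hy
    · exact G.irrefl hxy
    · exact hxp y (List.mem_toFinset.mp hy) hxy
  have := Finset.card_le_univ (insert x p.support.toFinset ∪ G.neighborFinset x)
  rw [Finset.card_union_of_disjoint hdisj, Finset.card_insert_of_notMem (by simpa),
    List.toFinset_card_of_nodup hp.support_nodup, length_support, card_neighborFinset_eq_degree]
    at this
  omega

end Walk

open Walk

lemma exists_isPath_forall_length_le [Fintype V] [Nonempty V] :
    ∃ (a b : V) (p : G.Walk a b), p.IsPath ∧
      ∀ (a' b' : V) (q : G.Walk a' b'), q.IsPath → q.length ≤ p.length := by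
  set S := {n | ∃ (a b : V) (p : G.Walk a b), p.IsPath ∧ p.length = n}
  have hne : S.Nonempty := ⟨0, Classical.arbitrary V, _, nil, .nil, rfl⟩
  have hbdd : BddAbove S :=
    ⟨Fintype.card V, by rintro _ ⟨_, _, p, hp, rfl⟩; exact hp.length_lt.le⟩
  obtain ⟨a, b, p, hp, hlen⟩ := Nat.sSup_mem hne hbdd
  exact ⟨a, b, p, hp, fun a' b' q hq => hlen ▸ le_csSup hbdd ⟨a', b', q, hq, rfl⟩⟩

theorem isHamiltonian_of_card_le_two_mul_degree [Fintype V] [DecidableEq V] [DecidableRel G.Adj]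
    (h3 : 3 ≤ Fintype.card V) (hdeg : ∀ v, Fintype.card V ≤ 2 * G.degree v) :
    G.IsHamiltonian := by
  intro _
  have : Nonempty V := Fintype.card_pos_iff.mp (by omega)
  obtain ⟨a, b, p, hp, hmax⟩ := exists_isPath_forall_length_le (G := G)
  have ha : ∀ c, G.Adj a c → c ∈ p.support := fun c =>
    hp.mem_support_of_adj_start_of_forall_length_le hmax
  have hb : ∀ c, G.Adj b c → c ∈ p.support := fun c hbc => by
    simpa using hp.reverse.mem_support_of_adj_start_of_forall_length_le (by simpa using hmax) hbc
  have hdeg_le := hp.degree_le_length_of_forall_adj_mem_support ha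
  have hlen := hp.length_lt
  have hdeg_a := hdeg a
  have hdeg_b := hdeg b
  obtain ⟨i, hi, hai, hbi⟩ :=
    exists_adj_getVert_of_length_lt_degree_add_degree p ha hb (by omega)
  obtain ⟨v, c, hc, hclen, hcsupp⟩ :=
    hp.exists_isCycle_of_adj_getVert (by omega) hi hai.symm hbi.symm
  by_cases hcover : ∀ x, x ∈ p.support
  · exact ⟨v, c, hc.isHamiltonianCycle_of_forall_mem_support fun x =>
      (hcsupp x).mpr (hcover x)⟩
  obtain ⟨x, hx⟩ := not_forall.mp hcover
  by_cases hnbr : ∃ y ∈ p.support, G.Adj y x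
  · obtain ⟨y, hy, hyx⟩ := hnbr
    obtain ⟨_, q, hq, hqlen⟩ :=
      hc.exists_isPath_length_eq ((hcsupp y).mpr hy) (mt (hcsupp x).mp hx) hyx
    have := hmax _ _ q hq
    omega
  · push Not at hnbr
    have := hp.degree_add_length_add_two_le_card hx fun y hy hxy => hnbr y hy hxy.symm
    have := hdeg x
    omega

end SimpleGraph

open Subgroup

section Cyclicizer

variable {G : Type*} [Group G]

lemma commute_of_isCyclic_closure_pair {g h : G} (hc : IsCyclic (closure {g, h} : Subgroup G)) :
    Commute g h := by
  have hg : g ∈ closure ({g, h} : Set G) := subset_closure (by simp)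
  have hh : h ∈ closure ({g, h} : Set G) := subset_closure (by simp)
  let := hc.commGroup
  exact congrArg Subtype.val (mul_comm (⟨g, hg⟩ : closure ({g, h} : Set G)) ⟨h, hh⟩)

lemma mem_relCyclicizer_self (x : G) : x ∈ relCyclicizer x := by
  show IsCyclic (closure ({x, x} : Set G))
  rw [Set.pair_eq_singleton, ← zpowers_eq_closure]
  infer_instance

lemma one_mem_cyclicizer : (1 : G) ∈ cyclicizer G := fun y => by
  show IsCyclic (closure ({1, y} : Set G))
  rw [closure_insert_one, ← zpowers_eq_closure]
  infer_instance

lemma cyclicizer_subset_relCyclicizer (x : G) : cyclicizer G ⊆ relCyclicizer x :=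
  fun _ hg => hg x

lemma relCyclicizer_subset_centralizer (x : G) :
    relCyclicizer x ⊆ (centralizer {x} : Set G) := fun _ hg =>
  mem_centralizer_singleton_iff.mpr (commute_of_isCyclic_closure_pair hg).eq

lemma exists_closure_eq_zpowers_of_forall_mem_cyclicizer (hG : ∀ x : G, x ∈ cyclicizer G)
    (s : Finset G) : ∃ c : G, closure (s : Set G) = zpowers c := by
  classical
  induction s using Finset.induction_on with
  | empty => exact ⟨1, by simp⟩
  | insert y t _ ih =>
    obtain ⟨c, hc⟩ := ih
    obtain ⟨d, hd⟩ := (Subgroup.isCyclic_iff_exists_zpowers_eq_top _).mp (hG y c)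
    refine ⟨d, ?_⟩
    rw [hd, Finset.coe_insert, Set.insert_eq, Subgroup.closure_union, hc, zpowers_eq_closure,
      ← Subgroup.closure_union, Set.singleton_union]

lemma isCyclic_of_forall_mem_cyclicizer [Group.FG G] (h : ∀ x : G, x ∈ cyclicizer G) :
    IsCyclic G := by
  obtain ⟨s, hs⟩ := Group.fg_def.mp ‹_›
  obtain ⟨c, hc⟩ := exists_closure_eq_zpowers_of_forall_mem_cyclicizer h s
  exact isCyclic_iff_exists_zpowers_eq_top.mpr ⟨c, hc ▸ hs⟩

lemma two_mul_card_relCyclicizer_le_of_notMem_center [Finite G] {x : G}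
    (hx : x ∉ (center G : Set G)) : 2 * Nat.card (relCyclicizer x) ≤ Nat.card G := by
  have hne : centralizer {x} ≠ ⊤ := fun htop =>
    hx (centralizer_eq_top_iff_subset.mp htop (Set.mem_singleton x))
  have hsub : Nat.card (relCyclicizer x) ≤ Nat.card (centralizer {x}) :=
    Nat.card_mono (Set.toFinite _) (relCyclicizer_subset_centralizer x)
  calc 2 * Nat.card (relCyclicizer x) ≤ (centralizer {x}).index * Nat.card (centralizer {x}) :=
        Nat.mul_le_mul (one_lt_index_of_ne_top hne) hsub
    _ = Nat.card G := by rw [mul_comm, card_mul_index]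

lemma noncyclicGraph_adj_iff {v w : {g : G // g ∉ cyclicizer G}} :
    (noncyclicGraph G).Adj v w ↔ (w : G) ∉ relCyclicizer (v : G) := by
  refine ⟨fun hvw hw => hvw.2 ?_,
    fun hw => ⟨fun hvw => hw (hvw ▸ mem_relCyclicizer_self _), ?_⟩⟩
  · rwa [Set.pair_comm]
  · rwa [Set.pair_comm]

end Cyclicizer

lemma Nat.card_subtype_notMem {α : Type*} [Finite α] (s : Set α) :
    Nat.card {x // x ∉ s} = Nat.card α - Nat.card s := by
  rw [← Set.coe_ofPred, Nat.card_coe_set_eq, Nat.card_coe_set_eq, ← Set.compl_def,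
    Set.ncard_compl]

lemma card_noncyclicGraph_adj {G : Type*} [Group G] [Finite G]
    (v : {g : G // g ∉ cyclicizer G}) :
    Nat.card {w // (noncyclicGraph G).Adj v w} = Nat.card G - Nat.card (relCyclicizer (v : G)) := by
  rw [← Nat.card_subtype_notMem]
  exact Nat.card_congr ((Equiv.subtypeEquivRight fun _ => noncyclicGraph_adj_iff).trans
    (Equiv.subtypeSubtypeEquivSubtype (p := (· ∉ cyclicizer G))
      (q := (· ∉ relCyclicizer (v : G))) fun hw hc =>
      hw (cyclicizer_subset_relCyclicizer _ hc)))

lemma card_sub_card_cyclicizer_lt_two_mul_card_noncyclicGraph_adj {G : Type*} [Group G]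
    [Finite G] (v : {g : G // g ∉ cyclicizer G})
    (hv : (v : G) ∈ (center G : Set G) →
      2 * Nat.card (relCyclicizer (v : G)) < Nat.card G + Nat.card (cyclicizer G)) :
    Nat.card G - Nat.card (cyclicizer G) < 2 * Nat.card {w // (noncyclicGraph G).Adj v w} := by
  have : Nonempty (cyclicizer G) := ⟨⟨1, one_mem_cyclicizer⟩⟩
  have hcyc_pos : 0 < Nat.card (cyclicizer G) := Nat.card_pos
  have hcyc_le : Nat.card (cyclicizer G) ≤ Nat.card (relCyclicizer (v : G)) :=
    Nat.card_mono (Set.toFinite _) (cyclicizer_subset_relCyclicizer _)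
  rw [card_noncyclicGraph_adj]
  by_cases hcenter : (v : G) ∈ (center G : Set G)
  · have := hv hcenter
    omega
  · have := two_mul_card_relCyclicizer_le_of_notMem_center hcenter
    omega

open scoped Classical in
theorem noncyclicGraph_hamiltonian_of_degree_condition
    {G : Type*} [Group G] [Fintype G] (hG : ¬ IsCyclic G)
    (h : ∀ x ∈ (Subgroup.center G : Set G), x ∉ cyclicizer G →
      2 * Nat.card (relCyclicizer x) < Nat.card G + Nat.card (cyclicizer G)) :
    (∀ v : {g : G // g ∉ cyclicizer G},
      Nat.card G - Nat.card (cyclicizer G) <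
        2 * Nat.card {w : {g : G // g ∉ cyclicizer G} // (noncyclicGraph G).Adj v w}) ∧
    (noncyclicGraph G).IsHamiltonian := by
  have hdeg (v : {g : G // g ∉ cyclicizer G}) :=
    card_sub_card_cyclicizer_lt_two_mul_card_noncyclicGraph_adj v (h _ · v.2)
  have hdegree (v) :
      (noncyclicGraph G).degree v = Nat.card {w // (noncyclicGraph G).Adj v w} := by
    rw [← SimpleGraph.card_neighborSet_eq_degree, Nat.card_eq_fintype_card]
    rfl
  have hcard :
      Fintype.card {g : G // g ∉ cyclicizer G} = Nat.card G - Nat.card (cyclicizer G) := by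
    rw [← Nat.card_eq_fintype_card, Nat.card_subtype_notMem]
  obtain ⟨g, hg⟩ := not_forall.mp (mt isCyclic_of_forall_mem_cyclicizer hG)
  refine ⟨hdeg, SimpleGraph.isHamiltonian_of_card_le_two_mul_degree ?_ fun v => ?_⟩
  · have hg_deg := hdeg ⟨g, hg⟩
    have hg_lt := (noncyclicGraph G).degree_lt_card_verts ⟨g, hg⟩
    rw [hdegree, hcard] at hg_lt
    omega
  · have := hdeg v
    rw [hcard, hdegree]
    omega
end

section
/- Let G be a finite non-cyclic group and suppose the quotient non-cyclic graph C_{G/Cyc(G)} is Hamiltonian. Then the non-cyclic graph C_G is Hamiltonian. -/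
namespace SimpleGraph

theorem IsHamiltonian.map_iso {α β : Type*} [Fintype α] [DecidableEq α] [Fintype β]
    [DecidableEq β] {G : SimpleGraph α} {G' : SimpleGraph β} (e : G ≃g G')
    (hG : G.IsHamiltonian) : G'.IsHamiltonian :=
  fun hβ ↦
    let ⟨_, p, hp⟩ := hG (by rwa [Fintype.card_congr e.toEquiv])
    ⟨_, p.map e.toHom, hp.map e.bijective⟩

theorem Walk.isHamiltonianCycle_of_support_tail {α : Type*} [DecidableEq α] {G : SimpleGraph α}
    {u : α} {p : G.Walk u u} (hlen : 3 ≤ p.length) (hnd : p.support.tail.Nodup)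
    (hmem : ∀ x, x ∈ p.support.tail) : p.IsHamiltonianCycle := by
  have hp : ¬p.Nil := fun h ↦ by simp [Walk.length_eq_zero_iff.mpr h] at hlen
  refine isHamiltonianCycle_iff_isCycle_and_support_count_tail_eq_one.mpr
    ⟨isCycle_iff_isPath_tail_and_le_length.mpr ⟨?_, hlen⟩,
      fun x ↦ List.count_eq_one_of_mem hnd (hmem x)⟩
  rwa [isPath_def, support_tail_of_not_nil p hp]

variable {F V : Type*} {H : SimpleGraph V} {v w : V}

/-- Runs through `q` once in each fiber listed in `l`, entering each fiber along `h`. -/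
def fiberwiseWalk (h : H.Adj v w) (q : H.Walk w v) (a : F) :
    (l : List F) → (H.comap (Prod.snd : F × V → V)).Walk (a, v) ((a :: l).getLast (by simp), v)
  | [] => .nil
  | b :: l => .cons (show (H.comap Prod.snd).Adj (a, v) (b, w) from h)
      (((q.map ⟨Prod.mk b, id⟩).append (fiberwiseWalk h q b l)).copy rfl (by simp))

theorem support_fiberwiseWalk (h : H.Adj v w) (q : H.Walk w v) (a : F) (l : List F) :
    (fiberwiseWalk h q a l).support = (a, v) :: l ×ˢ q.support := by
  induction l generalizing a with
  | nil => rfl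
  | cons b l ih =>
    rw [fiberwiseWalk, Walk.support_cons, Walk.support_copy, Walk.support_append,
      Walk.support_map, ih]
    rfl

theorem IsHamiltonian.comap_snd [Fintype F] [Nonempty F] [DecidableEq F] [Fintype V]
    [DecidableEq V] (hH : H.IsHamiltonian) (hV : Fintype.card V ≠ 1) :
    (H.comap (Prod.snd : F × V → V)).IsHamiltonian := by
  intro _
  obtain ⟨v, p, hp⟩ := hH hV
  cases p with
  | nil => exact absurd hp.isCycle Walk.not_isCycle_nil
  | cons h q =>
    have hq := (Walk.isHamiltonianCycle_iff_isCycle_and_support_count_tail_eq_one.mp hp).2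
    simp only [Walk.support_cons, List.tail_cons] at hq
    set l := (Finset.univ : Finset F).toList
    have hl : l ≠ [] := by simp [l, Finset.univ_nonempty.ne_empty]
    obtain ⟨c, hc⟩ : ∃ c, (c :: l).getLast (List.cons_ne_nil c l) = c :=
      ⟨l.getLast hl, List.getLast_cons hl⟩
    let C := (fiberwiseWalk h q c l).copy rfl (by rw [hc])
    have hsupp : C.support.tail = l ×ˢ q.support := by simp [C, support_fiberwiseWalk]
    refine ⟨(c, v), C, Walk.isHamiltonianCycle_of_support_tail ?_ ?_ ?_⟩
    · have hlen := congrArg List.length hsupp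
      rw [List.length_tail, Walk.length_support, List.length_product, Walk.length_support,
        Nat.add_sub_cancel] at hlen
      rw [hlen]
      exact hp.isCycle.three_le_length.trans
        (Nat.le_mul_of_pos_left _ (List.length_pos_iff.mpr hl))
    · rw [hsupp]
      exact (Finset.nodup_toList _).product (List.nodup_iff_count_eq_one.mpr fun x _ ↦ hq x)
    · intro x
      rw [hsupp, List.mem_product]
      exact ⟨by simp [l], List.count_pos_iff.mp (by simp [hq])⟩

end SimpleGraph

section Cyclicizer

open Subgroup

variable {G : Type*} [Group G]

theorem isCyclic_closure_pair_iff {x y : G} :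
    IsCyclic (closure {x, y}) ↔ ∃ g : G, x ∈ zpowers g ∧ y ∈ zpowers g := by
  constructor
  · intro h
    obtain ⟨g, hg⟩ := (closure {x, y}).isCyclic_iff_exists_zpowers_eq_top.mp h
    exact ⟨g, hg ▸ subset_closure (by simp), hg ▸ subset_closure (by simp)⟩
  · rintro ⟨g, hx, hy⟩
    have : closure {x, y} ≤ zpowers g := (closure_le _).mpr (Set.insert_subset hx (by simpa))
    exact isCyclic_of_le this

theorem exists_zpowers_superset_of_subset_cyclicizer {s : Set G} (hs : s.Finite)
    (hsc : s ⊆ cyclicizer G) (z : G) : ∃ g : G, z ∈ zpowers g ∧ s ⊆ zpowers g := by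
  induction s, hs using Set.Finite.induction_on with
  | empty => exact ⟨z, mem_zpowers z, Set.empty_subset _⟩
  | @insert a s _ _ ih =>
    obtain ⟨g, hzg, hsg⟩ := ih ((Set.subset_insert a s).trans hsc)
    obtain ⟨g', hag', hgg'⟩ := isCyclic_closure_pair_iff.mp (hsc (Set.mem_insert a s) g)
    have hle : zpowers g ≤ zpowers g' := zpowers_le.mpr hgg'
    exact ⟨g', hle hzg, Set.insert_subset hag' (hsg.trans hle)⟩

theorem noncyclicGraph_adj_iff_s19 {x y : {g : G // g ∉ cyclicizer G}} :
    (noncyclicGraph G).Adj x y ↔ ¬IsCyclic (closure {(x : G), (y : G)}) := by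
  refine ⟨And.right, fun h ↦ ⟨?_, h⟩⟩
  rintro rfl
  exact h (isCyclic_closure_pair_iff.mpr ⟨x, mem_zpowers _, mem_zpowers _⟩)

theorem noncyclicGraph_exists_adj (x : {g : G // g ∉ cyclicizer G}) :
    ∃ y, (noncyclicGraph G).Adj x y := by
  obtain ⟨y, hy⟩ : ∃ y : G, ¬IsCyclic (closure {(x : G), y}) := by
    simpa [cyclicizer] using x.2
  have hy' : y ∉ cyclicizer G := fun hc ↦ hy (by rw [Set.pair_comm]; exact hc x)
  exact ⟨⟨y, hy'⟩, noncyclicGraph_adj_iff_s19.mpr hy⟩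

theorem noncyclicGraph_card_ne_one [Fintype {g : G // g ∉ cyclicizer G}] :
    Fintype.card {g : G // g ∉ cyclicizer G} ≠ 1 := by
  intro h
  obtain ⟨x, hx⟩ := Fintype.card_eq_one_iff.mp h
  obtain ⟨y, hxy⟩ := noncyclicGraph_exists_adj x
  exact hxy.ne ((hx x).trans (hx y).symm)

variable (N : Subgroup G) [N.Normal] [Finite N]

theorem isCyclic_closure_pair_mk_iff (hN : (N : Set G) ⊆ cyclicizer G) {x y : G} :
    IsCyclic (closure {(x : G ⧸ N), (y : G ⧸ N)}) ↔ IsCyclic (closure {x, y}) := by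
  simp only [isCyclic_closure_pair_iff]
  constructor
  · rintro ⟨gq, hx, hy⟩
    obtain ⟨z, rfl⟩ := QuotientGroup.mk_surjective gq
    obtain ⟨g, hzg, hNg⟩ := exists_zpowers_superset_of_subset_cyclicizer (Set.toFinite N) hN z
    have key : ∀ a : G, (a : G ⧸ N) ∈ zpowers (z : G ⧸ N) → a ∈ zpowers g := by
      rintro a ⟨n, hn⟩
      have : (z ^ n)⁻¹ * a ∈ N := QuotientGroup.eq.mp (by rw [QuotientGroup.mk_zpow]; exact hn)
      simpa using mul_mem (zpow_mem hzg n) (hNg this)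
    exact ⟨g, key x hx, key y hy⟩
  · rintro ⟨g, ⟨m, rfl⟩, ⟨n, rfl⟩⟩
    exact ⟨g, ⟨m, by simp⟩, ⟨n, by simp⟩⟩

theorem mk_mem_cyclicizer_iff (hN : (N : Set G) ⊆ cyclicizer G) {x : G} :
    (x : G ⧸ N) ∈ cyclicizer (G ⧸ N) ↔ x ∈ cyclicizer G := by
  simp only [cyclicizer, Set.mem_ofPred_eq, QuotientGroup.mk_surjective.forall,
    isCyclic_closure_pair_mk_iff N hN]

noncomputable def noncyclicGraphEquivProd (hN : (N : Set G) ⊆ cyclicizer G) :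
    N × {q : G ⧸ N // q ∉ cyclicizer (G ⧸ N)} ≃ {g : G // g ∉ cyclicizer G} :=
  ((Equiv.subtypeEquivRight fun _ ↦ not_congr (mk_mem_cyclicizer_iff N hN).symm).trans
    (QuotientGroup.preimageMkEquivSubgroupProdSet N (cyclicizer (G ⧸ N))ᶜ)).symm

theorem mk_noncyclicGraphEquivProd (hN : (N : Set G) ⊆ cyclicizer G)
    (z : N × {q : G ⧸ N // q ∉ cyclicizer (G ⧸ N)}) :
    ((noncyclicGraphEquivProd N hN z : G) : G ⧸ N) = z.2 :=
  congrArg (fun w ↦ (w.2 : G ⧸ N)) ((noncyclicGraphEquivProd N hN).symm_apply_apply z)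

noncomputable def noncyclicGraphIsoComap (hN : (N : Set G) ⊆ cyclicizer G) :
    (noncyclicGraph (G ⧸ N)).comap (Prod.snd : N × _ → _) ≃g noncyclicGraph G where
  toEquiv := noncyclicGraphEquivProd N hN
  map_rel_iff' {a b} := by
    rw [SimpleGraph.comap_adj, noncyclicGraph_adj_iff_s19, noncyclicGraph_adj_iff_s19,
      ← isCyclic_closure_pair_mk_iff N hN, mk_noncyclicGraphEquivProd, mk_noncyclicGraphEquivProd]

end Cyclicizer

open scoped Classical in
theorem noncyclicGraph_hamiltonian_of_quotient_hamiltonian_general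
    {G : Type*} [Group G] [Fintype G]
    (N : Subgroup G) [N.Normal] (hN : (N : Set G) = cyclicizer G)
    (h : (noncyclicGraph (G ⧸ N)).IsHamiltonian) :
    (noncyclicGraph G).IsHamiltonian :=
  (h.comap_snd noncyclicGraph_card_ne_one).map_iso (noncyclicGraphIsoComap N hN.subset)

open scoped Classical in
theorem noncyclicGraph_hamiltonian_of_quotient_hamiltonian
    {G : Type*} [Group G] [Fintype G] (hG : ¬ IsCyclic G)
    (N : Subgroup G) [N.Normal] (hN : (N : Set G) = cyclicizer G)
    (h : (noncyclicGraph (G ⧸ N)).IsHamiltonian) :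
    (noncyclicGraph G).IsHamiltonian :=
  noncyclicGraph_hamiltonian_of_quotient_hamiltonian_general N hN h
end
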